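/- arXiv:0808.4010 — 5 statements merged into one kernel-verified Lean document; each statement's English description precedes it below -/
import Mathlib

section
/- Let (X_t) be a conservative strong Markov process on ℝ^d with transition density p(t,x,y) satisfying p(t,x,y) ≤ c t^{−d/2} for all t > 0 and q.e. x, y. Then there is a constant c₁ > 0 such that for every x₀ ∈ ℝ^d, r > 0 and x ∈ B(x₀,r), the expected exit time satisfies E_x[τ_{B(x₀,r)}] ≤ c₁ r². -/
open MeasureTheory ENNReal

/-!
At time `t = c₂ r²` the heat-kernel bound `p(t,x,y) ≤ c t^{-d/2}` leaves mass at most `1/2` on any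
ball of radius `r`, so from every starting point the process stays in the ball up to time `t` with
probability at most `1/2`. The Markov property turns this into `P_x(τ > k t) ≤ 2^{-k}`, and summing
over `k` gives `E_x τ ≤ 2 t = 2 c₂ r²`.
-/

theorem ofReal_le_tsum_ite {t₀ : ℝ} (ht₀ : 0 < t₀) (a : ℝ) :
    ENNReal.ofReal a ≤ ∑' k : ℕ, if (k : ℝ) * t₀ < a then ENNReal.ofReal t₀ else 0 := by
  set n := ⌈a / t₀⌉₊
  have han : a ≤ n * t₀ := (div_le_iff₀ ht₀).1 (Nat.le_ceil _)
  have hlt : ∀ k ∈ Finset.range n, (k : ℝ) * t₀ < a := fun k hk =>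
    (lt_div_iff₀ ht₀).1 (Nat.lt_ceil.1 (Finset.mem_range.1 hk))
  calc ENNReal.ofReal a ≤ ENNReal.ofReal (n * t₀) := ENNReal.ofReal_le_ofReal han
    _ = ∑ _k ∈ Finset.range n, ENNReal.ofReal t₀ := by
      rw [Finset.sum_const, Finset.card_range, nsmul_eq_mul,
        ENNReal.ofReal_mul (Nat.cast_nonneg _), ENNReal.ofReal_natCast]
    _ = ∑ k ∈ Finset.range n, if (k : ℝ) * t₀ < a then ENNReal.ofReal t₀ else 0 :=
      Finset.sum_congr rfl fun k hk => (if_pos (hlt k hk)).symm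
    _ ≤ _ := ENNReal.sum_le_tsum _

/-- A layer-cake bound that needs no measurability of `f`. -/
theorem lintegral_ofReal_le_tsum {Ω : Type*} [MeasurableSpace Ω] (μ : Measure Ω) (f : Ω → ℝ)
    {t₀ : ℝ} (ht₀ : 0 < t₀) :
    ∫⁻ ω, ENNReal.ofReal (f ω) ∂μ ≤ ∑' k : ℕ, ENNReal.ofReal t₀ * μ {ω | k * t₀ < f ω} := by
  set B : ℕ → Set Ω := fun k => toMeasurable μ {ω | k * t₀ < f ω}
  have hpt : ∀ ω, ENNReal.ofReal (f ω) ≤ ∑' k, (B k).indicator (fun _ => ENNReal.ofReal t₀) ω :=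
    fun ω => (ofReal_le_tsum_ite ht₀ (f ω)).trans <| ENNReal.tsum_le_tsum fun k => by
      split_ifs with h
      · exact (Set.indicator_of_mem (subset_toMeasurable μ {ω | (k : ℝ) * t₀ < f ω} h)
          (fun _ => ENNReal.ofReal t₀)).ge
      · exact bot_le
  calc ∫⁻ ω, ENNReal.ofReal (f ω) ∂μ
      ≤ ∫⁻ ω, ∑' k, (B k).indicator (fun _ => ENNReal.ofReal t₀) ω ∂μ := lintegral_mono hpt
    _ = ∑' k, ∫⁻ ω, (B k).indicator (fun _ => ENNReal.ofReal t₀) ω ∂μ :=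
      lintegral_tsum fun k =>
        (measurable_const.indicator (measurableSet_toMeasurable _ _)).aemeasurable
    _ = ∑' k : ℕ, ENNReal.ofReal t₀ * μ {ω | k * t₀ < f ω} := tsum_congr fun k => by
      rw [lintegral_indicator_const (measurableSet_toMeasurable _ _), measure_toMeasurable]

section Markov

variable {α Ω : Type*} [MeasurableSpace Ω] {P : α → Measure Ω} {Y : ℝ → Ω → α} {T : Ω → ℝ}
  {t₀ : ℝ} {q : ℝ≥0∞}

theorem measure_lt_mul_le_pow (hP : ∀ x, IsProbabilityMeasure (P x))
    (hmarkov : ∀ x (t s : ℝ), 0 < t → 0 < s →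
      P x {ω | t + s < T ω} ≤ ∫⁻ ω in {ω | t < T ω}, P (Y t ω) {ω' | s < T ω'} ∂P x)
    (ht₀ : 0 < t₀) (hq : ∀ y, P y {ω | t₀ < T ω} ≤ q) (k : ℕ) (x : α) :
    P x {ω | k * t₀ < T ω} ≤ q ^ k := by
  induction k generalizing x with
  | zero =>
    have := hP x
    simpa using prob_le_one
  | succ k ih =>
    rcases Nat.eq_zero_or_pos k with rfl | hk
    · simpa using hq x
    have hsplit : ((k + 1 : ℕ) : ℝ) * t₀ = k * t₀ + t₀ := by push_cast; ring
    calc P x {ω | ((k + 1 : ℕ) : ℝ) * t₀ < T ω}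
        ≤ ∫⁻ ω in {ω | k * t₀ < T ω}, P (Y (k * t₀) ω) {ω' | t₀ < T ω'} ∂P x := by
          rw [hsplit]; exact hmarkov x _ _ (by positivity) ht₀
      _ ≤ ∫⁻ _ in {ω | k * t₀ < T ω}, q ∂P x := lintegral_mono fun ω => hq _
      _ = q * P x {ω | k * t₀ < T ω} := setLIntegral_const _ _
      _ ≤ q * q ^ k := by gcongr; exact ih x
      _ = q ^ (k + 1) := (pow_succ' q k).symm

theorem lintegral_ofReal_le_of_markov (hP : ∀ x, IsProbabilityMeasure (P x))
    (hmarkov : ∀ x (t s : ℝ), 0 < t → 0 < s →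
      P x {ω | t + s < T ω} ≤ ∫⁻ ω in {ω | t < T ω}, P (Y t ω) {ω' | s < T ω'} ∂P x)
    (ht₀ : 0 < t₀) (hq : ∀ y, P y {ω | t₀ < T ω} ≤ q) (x : α) :
    ∫⁻ ω, ENNReal.ofReal (T ω) ∂P x ≤ ENNReal.ofReal t₀ * (1 - q)⁻¹ :=
  calc ∫⁻ ω, ENNReal.ofReal (T ω) ∂P x
      ≤ ∑' k : ℕ, ENNReal.ofReal t₀ * P x {ω | k * t₀ < T ω} := lintegral_ofReal_le_tsum _ _ ht₀
    _ ≤ ∑' k : ℕ, ENNReal.ofReal t₀ * q ^ k := ENNReal.tsum_le_tsum fun k =>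
      by gcongr; exact measure_lt_mul_le_pow hP hmarkov ht₀ hq k x
    _ = ENNReal.ofReal t₀ * (1 - q)⁻¹ := by rw [ENNReal.tsum_mul_left, ENNReal.tsum_geometric]

end Markov

theorem mem_of_lt_sInf_exit {Ω E : Type*} {X : ℝ → Ω → E} {B : Set E} {ω : Ω} {t : ℝ}
    (ht : 0 < t) (h : t < sInf {s | 0 < s ∧ X s ω ∉ B}) : X t ω ∈ B := by
  by_contra hX
  exact h.not_ge (csInf_le ⟨0, fun s hs => hs.1.le⟩ ⟨ht, hX⟩)

theorem rpow_two_div_mul_sq_rpow_neg {d : ℕ} (hd : d ≠ 0) {M r : ℝ} (hM : 0 ≤ M) (hr : 0 ≤ r) :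
    (M ^ (2 / (d : ℝ)) * r ^ 2) ^ (-(d : ℝ) / 2) = (M * r ^ d)⁻¹ := by
  have hd' : (d : ℝ) ≠ 0 := Nat.cast_ne_zero.2 hd
  rw [Real.mul_rpow (by positivity) (by positivity), ← Real.rpow_mul hM,
    ← Real.rpow_natCast r 2, ← Real.rpow_mul hr, mul_inv,
    show 2 / (d : ℝ) * (-(d : ℝ) / 2) = -1 by field_simp,
    show ((2 : ℕ) : ℝ) * (-(d : ℝ) / 2) = -d by push_cast; ring,
    Real.rpow_neg_one, Real.rpow_neg hr, Real.rpow_natCast]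

/-- The constant `c₂` of the argument: at time `c₂ r²` the density bound `c t^{-d/2}` leaves
mass at most `1/2` on any ball of radius `r`. -/
noncomputable def exitTimeConst (d : ℕ) (c : ℝ) : ℝ :=
  max 1 (2 * c * (volume (Metric.ball (0 : EuclideanSpace ℝ (Fin d)) 1)).toReal) ^ (2 / (d : ℝ))

theorem exitTimeConst_pos (d : ℕ) (c : ℝ) : 0 < exitTimeConst d c :=
  Real.rpow_pos_of_pos (lt_of_lt_of_le one_pos (le_max_left _ _)) _

theorem measure_mem_ball_le_half {Ω : Type*} [MeasurableSpace Ω] {d : ℕ} (hd : d ≠ 0)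
    {ν : Measure Ω} {Z : Ω → EuclideanSpace ℝ (Fin d)} {f : EuclideanSpace ℝ (Fin d) → ℝ}
    {c r : ℝ} (hr : 0 < r)
    (hZ : ∀ s, MeasurableSet s → ν {ω | Z ω ∈ s} = ∫⁻ y in s, ENNReal.ofReal (f y))
    (hf : ∀ y, f y ≤ c * (exitTimeConst d c * r ^ 2) ^ (-(d : ℝ) / 2))
    (x₀ : EuclideanSpace ℝ (Fin d)) :
    ν {ω | Z ω ∈ Metric.ball x₀ r} ≤ 2⁻¹ := by
  set V := volume (Metric.ball (0 : EuclideanSpace ℝ (Fin d)) 1)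
  set M := max 1 (2 * c * V.toReal)
  have hM : 0 < M := lt_of_lt_of_le one_pos (le_max_left _ _)
  have hVM : c * V.toReal / M ≤ 2⁻¹ := by
    rw [div_le_iff₀ hM]; linarith [le_max_right 1 (2 * c * V.toReal)]
  have hpow : (exitTimeConst d c * r ^ 2) ^ (-(d : ℝ) / 2) = (M * r ^ d)⁻¹ :=
    rpow_two_div_mul_sq_rpow_neg hd hM.le hr.le
  calc ν {ω | Z ω ∈ Metric.ball x₀ r}
      = ∫⁻ y in Metric.ball x₀ r, ENNReal.ofReal (f y) := hZ _ measurableSet_ball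
    _ ≤ ∫⁻ _ in Metric.ball x₀ r, ENNReal.ofReal (c * (M * r ^ d)⁻¹) :=
      lintegral_mono fun y => ENNReal.ofReal_le_ofReal ((hf y).trans_eq (by rw [hpow]))
    _ = ENNReal.ofReal (c * (M * r ^ d)⁻¹) * (ENNReal.ofReal (r ^ d) * V) := by
      rw [setLIntegral_const, Measure.addHaar_ball_of_pos _ _ hr, finrank_euclideanSpace_fin]
    _ = ENNReal.ofReal (c * V.toReal / M) := by
      have hV : V ≠ ⊤ := measure_ball_lt_top.ne
      conv_lhs => rw [← ENNReal.ofReal_toReal hV]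
      rw [← mul_assoc,
        ← ENNReal.ofReal_mul' (by positivity), ← ENNReal.ofReal_mul' ENNReal.toReal_nonneg]
      congr 1
      field_simp
    _ ≤ ENNReal.ofReal 2⁻¹ := ENNReal.ofReal_le_ofReal hVM
    _ = 2⁻¹ := by rw [ENNReal.ofReal_inv_of_pos two_pos, ENNReal.ofReal_ofNat]

theorem stmt_6_general (d : ℕ) (hd : 1 ≤ d) {Ω : Type*} [MeasurableSpace Ω]
    (P : EuclideanSpace ℝ (Fin d) → Measure Ω)
    (hP : ∀ x, IsProbabilityMeasure (P x))
    (X : ℝ → Ω → EuclideanSpace ℝ (Fin d))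
    (p : ℝ → EuclideanSpace ℝ (Fin d) → EuclideanSpace ℝ (Fin d) → ℝ)
    (c : ℝ)
    (hdens : ∀ t : ℝ, 0 < t → ∀ x, ∀ s : Set (EuclideanSpace ℝ (Fin d)),
      MeasurableSet s → P x {ω | X t ω ∈ s} = ∫⁻ y in s, ENNReal.ofReal (p t x y))
    (hub : ∀ t : ℝ, 0 < t → ∀ x y, p t x y ≤ c * t ^ (-(d : ℝ) / 2))
    (τ : EuclideanSpace ℝ (Fin d) → ℝ → Ω → ℝ)
    (hτ : ∀ x₀ r ω, τ x₀ r ω = sInf {t : ℝ | 0 < t ∧ X t ω ∉ Metric.ball x₀ r})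
    (hmarkov : ∀ x₀ r x (t s : ℝ), 0 < t → 0 < s →
      P x {ω | t + s < τ x₀ r ω} ≤
        ∫⁻ ω in {ω | t < τ x₀ r ω}, P (X t ω) {ω' | s < τ x₀ r ω'} ∂ (P x)) :
    ∃ c₁ : ℝ, 0 < c₁ ∧ ∀ x₀ (r : ℝ), 0 < r → ∀ x ∈ Metric.ball x₀ r,
      ∫⁻ ω, ENNReal.ofReal (τ x₀ r ω) ∂ (P x) ≤ ENNReal.ofReal (c₁ * r ^ 2) := by
  have hc₂ := exitTimeConst_pos d c
  refine ⟨2 * exitTimeConst d c, by positivity, fun x₀ r hr x _ => ?_⟩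
  set t₀ := exitTimeConst d c * r ^ 2
  have ht₀ : 0 < t₀ := by positivity
  have hexit : ∀ y, P y {ω | t₀ < τ x₀ r ω} ≤ 2⁻¹ := fun y =>
    (measure_mono fun ω hω => mem_of_lt_sInf_exit ht₀ (hτ x₀ r ω ▸ hω)).trans
      (measure_mem_ball_le_half (by omega) hr (hdens t₀ ht₀ y) (hub t₀ ht₀ y) x₀)
  calc ∫⁻ ω, ENNReal.ofReal (τ x₀ r ω) ∂P x
      ≤ ENNReal.ofReal t₀ * (1 - 2⁻¹)⁻¹ :=
        lintegral_ofReal_le_of_markov hP (hmarkov x₀ r) ht₀ hexit x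
    _ = ENNReal.ofReal (2 * exitTimeConst d c * r ^ 2) := by
      rw [ENNReal.one_sub_inv_two, inv_inv, mul_assoc, ENNReal.ofReal_mul zero_le_two,
        ENNReal.ofReal_ofNat, mul_comm]

theorem stmt_6 (d : ℕ) (hd : 1 ≤ d) {Ω : Type*} [MeasurableSpace Ω]
    (P : EuclideanSpace ℝ (Fin d) → Measure Ω)
    (hP : ∀ x, IsProbabilityMeasure (P x))
    (X : ℝ → Ω → EuclideanSpace ℝ (Fin d))
    (p : ℝ → EuclideanSpace ℝ (Fin d) → EuclideanSpace ℝ (Fin d) → ℝ)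
    (c : ℝ) (hc : 0 < c)
    (hdens : ∀ t : ℝ, 0 < t → ∀ x, ∀ s : Set (EuclideanSpace ℝ (Fin d)),
      MeasurableSet s → P x {ω | X t ω ∈ s} = ∫⁻ y in s, ENNReal.ofReal (p t x y))
    (hub : ∀ t : ℝ, 0 < t → ∀ x y, p t x y ≤ c * t ^ (-(d : ℝ) / 2))
    (τ : EuclideanSpace ℝ (Fin d) → ℝ → Ω → ℝ)
    (hτ : ∀ x₀ r ω, τ x₀ r ω = sInf {t : ℝ | 0 < t ∧ X t ω ∉ Metric.ball x₀ r})
    (hmarkov : ∀ x₀ r x (t s : ℝ), 0 < t → 0 < s →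
      P x {ω | t + s < τ x₀ r ω} ≤
        ∫⁻ ω in {ω | t < τ x₀ r ω}, P (X t ω) {ω' | s < τ x₀ r ω'} ∂ (P x)) :
    ∃ c₁ : ℝ, 0 < c₁ ∧ ∀ x₀ (r : ℝ), 0 < r → ∀ x ∈ Metric.ball x₀ r,
      ∫⁻ ω, ENNReal.ofReal (τ x₀ r ω) ∂ (P x) ≤ ENNReal.ofReal (c₁ * r ^ 2) :=
  stmt_6_general d hd P hP X p c hdens hub τ hτ hmarkov
end

section
/- Let φ satisfy the scaling condition c^{-1}(R/r)^{β₁} ≤ φ(R)/φ(r) ≤ c(R/r)^{β₂} (0<β₁≤β₂<2) and the integral condition ∫₀^r s/φ(s) ds ≤ c r²/φ(r) for all r > 0. Then for the cut-off distance function ψ(ξ) = (s/3)(|ξ−x| ∧ |x−y|) and any kernel J with J(η,ξ) ≤ C/(|η−ξ|^d φ(|η−ξ|)), one has ∫_{|η−ξ| ≤ λ} (ψ(η)−ψ(ξ))² e^{2|ψ(η)−ψ(ξ)|} J(η,ξ) dη ≤ C' s² e^{2sλ/3} λ²/φ(λ) for all ξ ∈ ℝ^d, λ > 0, s > 0. 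-/
open MeasureTheory ENNReal Set

theorem stmt_9 (d : ℕ) (hd : 1 ≤ d) (c C β₁ β₂ : ℝ)
    (hc : 1 ≤ c) (hC : 0 < C) (hβ₁ : 0 < β₁) (hβ₁₂ : β₁ ≤ β₂) (hβ₂ : β₂ < 2)
    (φ : ℝ → ℝ)
    (hpos : ∀ s : ℝ, 0 < s → 0 < φ s)
    (hscale : ∀ r R : ℝ, 0 < r → r < R →
      c⁻¹ * (R / r) ^ β₁ ≤ φ R / φ r ∧ φ R / φ r ≤ c * (R / r) ^ β₂)
    (hint : ∀ r : ℝ, 0 < r → (∫ s in Set.Ioc (0 : ℝ) r, s / φ s) ≤ c * r ^ 2 / φ r)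
    (J : EuclideanSpace ℝ (Fin d) → EuclideanSpace ℝ (Fin d) → ℝ≥0∞)
    (hJ : ∀ η ξ : EuclideanSpace ℝ (Fin d), η ≠ ξ →
      J η ξ ≤ ENNReal.ofReal (C / (‖η - ξ‖ ^ d * φ ‖η - ξ‖))) :
    ∃ C' : ℝ, 0 < C' ∧ ∀ (x y ξ : EuclideanSpace ℝ (Fin d)) (s lam : ℝ),
      0 < s → 0 < lam →
      (∫⁻ η in Metric.closedBall ξ lam,
          ENNReal.ofReal
            ((s / 3 * min ‖η - x‖ ‖x - y‖ - s / 3 * min ‖ξ - x‖ ‖x - y‖) ^ 2 *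
              Real.exp (2 * |s / 3 * min ‖η - x‖ ‖x - y‖ - s / 3 * min ‖ξ - x‖ ‖x - y‖|))
            * J η ξ)
        ≤ ENNReal.ofReal (C' * s ^ 2 * Real.exp (2 * s * lam / 3) * lam ^ 2 / φ lam) := by
  classical
  set V : ℝ≥0∞ := volume (Metric.ball (0 : EuclideanSpace ℝ (Fin d)) 1) with hV
  have hVpos : 0 < V := Metric.measure_ball_pos _ _ one_pos
  have hVlt : V < ⊤ := measure_ball_lt_top
  set q : ℝ := (2 : ℝ) ^ (β₂ - 2) with hq
  have hq0 : 0 < q := Real.rpow_pos_of_pos two_pos _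
  have hq1 : q < 1 := by
    have : (2:ℝ) ^ (β₂ - 2) < 1 :=
      Real.rpow_lt_one_of_one_lt_of_neg one_lt_two (by linarith)
    exact this
  set T : ℝ≥0∞ := V * (1 - ENNReal.ofReal q)⁻¹ with hT
  have hone : (1 : ℝ≥0∞) - ENNReal.ofReal q ≠ 0 := by
    have : ENNReal.ofReal q < 1 := by
      rw [ENNReal.ofReal_lt_one]; exact hq1
    exact ne_of_gt (tsub_pos_of_lt this)
  have hTlt : T < ⊤ := by
    apply ENNReal.mul_lt_top hVlt
    simpa [lt_top_iff_ne_top] using (ENNReal.inv_ne_top.mpr hone)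
  have hTne : T ≠ 0 := by
    apply mul_ne_zero hVpos.ne'
    simp [ENNReal.inv_ne_zero]
  have hTR : 0 < T.toReal := ENNReal.toReal_pos hTne hTlt.ne
  refine ⟨(C * c * 2 ^ d / 9) * T.toReal, by positivity, ?_⟩
  intro x y ξ s lam hs hlam
  have hφlam : 0 < φ lam := hpos lam hlam
  set E : ℝ := Real.exp (2 * s * lam / 3) with hE
  have hEpos : 0 < E := Real.exp_pos _
  set M : ℝ := C * c * 2 ^ d / 9 * (s ^ 2 * E * lam ^ 2 / φ lam) with hM
  have hM0 : 0 ≤ M := by positivity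
  -- radii and annuli
  set r : ℕ → ℝ := fun k => lam / 2 ^ k with hr
  have hrpos : ∀ k, 0 < r k := fun k => by positivity
  have hrle : ∀ k, r k ≤ lam := fun k =>
    div_le_self hlam.le (one_le_pow₀ one_le_two)
  set A : ℕ → Set (EuclideanSpace ℝ (Fin d)) :=
    fun k => Metric.closedBall ξ (r k) \ Metric.closedBall ξ (r (k + 1)) with hA
  -- the integrand
  set ψd : EuclideanSpace ℝ (Fin d) → ℝ :=
    fun η => s / 3 * min ‖η - x‖ ‖x - y‖ - s / 3 * min ‖ξ - x‖ ‖x - y‖ with hψd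
  set g : EuclideanSpace ℝ (Fin d) → ℝ≥0∞ :=
    fun η => ENNReal.ofReal (ψd η ^ 2 * Real.exp (2 * |ψd η|)) * J η ξ with hg
  -- Lipschitz bound
  have hLip : ∀ η, |ψd η| ≤ s / 3 * ‖η - ξ‖ := by
    intro η
    have h1 : |min ‖η - x‖ ‖x - y‖ - min ‖ξ - x‖ ‖x - y‖| ≤ ‖η - ξ‖ := by
      refine (abs_min_sub_min_le_max _ _ _ _).trans ?_
      have h2 : |‖η - x‖ - ‖ξ - x‖| ≤ ‖η - ξ‖ := by
        have := abs_norm_sub_norm_le (η - x) (ξ - x)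
        simpa [sub_sub_sub_cancel_right] using this
      exact max_le h2 (by simp)
    have : ψd η = s / 3 * (min ‖η - x‖ ‖x - y‖ - min ‖ξ - x‖ ‖x - y‖) := by
      rw [hψd]; ring
    rw [this, abs_mul, abs_of_pos (by positivity : (0:ℝ) < s / 3)]
    exact mul_le_mul_of_nonneg_left h1 (by positivity)
  -- pointwise bound on the annulus A k
  have hpoint : ∀ k, ∀ η ∈ A k,
      g η ≤ ENNReal.ofReal ((s / 3) ^ 2 * E * C * c * lam ^ β₂ *
        (r k ^ ((2:ℝ) - β₂) / (r (k+1)) ^ d) / φ lam) := by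
    intro k η hη
    obtain ⟨hη1, hη2⟩ := hη
    set t : ℝ := ‖η - ξ‖ with ht
    have htd : dist η ξ = t := by rw [dist_eq_norm]
    have ht1 : t ≤ r k := by
      have := Metric.mem_closedBall.mp hη1; rwa [htd] at this
    have ht2 : r (k+1) < t := by
      have := Metric.mem_closedBall.not.mp hη2; rw [htd] at this; linarith [not_le.mp this]
    have htpos : 0 < t := lt_trans (hrpos (k+1)) ht2
    have htlam : t ≤ lam := ht1.trans (hrle k)
    have hne : η ≠ ξ := by
      intro h
      have h0 : (0:ℝ) < ‖η - ξ‖ := htpos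
      rw [h, sub_self, norm_zero] at h0
      exact lt_irrefl _ h0
    have hφt : 0 < φ t := hpos t htpos
    -- scaling bound: φ lam / φ t ≤ c * (lam / t) ^ β₂
    have hsc : φ lam / φ t ≤ c * (lam / t) ^ β₂ := by
      rcases lt_or_eq_of_le htlam with h | h
      · exact (hscale t lam htpos h).2
      · rw [h, div_self (hpos lam hlam).ne', div_self hlam.ne', Real.one_rpow]
        linarith
    have hinv : 1 / φ t ≤ c * (lam / t) ^ β₂ / φ lam := by
      rw [div_le_div_iff₀ hφt hφlam]
      calc 1 * φ lam = (φ lam / φ t) * φ t := by field_simp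
        _ ≤ (c * (lam / t) ^ β₂) * φ t := mul_le_mul_of_nonneg_right hsc hφt.le
    -- exponential and square bounds
    have habs : |ψd η| ≤ s / 3 * t := hLip η
    have hsq : ψd η ^ 2 ≤ (s / 3 * t) ^ 2 := by
      rw [← sq_abs]; exact pow_le_pow_left₀ (abs_nonneg _) habs 2
    have hexp : Real.exp (2 * |ψd η|) ≤ E := by
      rw [hE]; apply Real.exp_le_exp.2; nlinarith [abs_nonneg (ψd η)]
    have hP : ψd η ^ 2 * Real.exp (2 * |ψd η|) ≤ (s/3)^2 * t^2 * E := by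
      have := mul_le_mul hsq hexp (Real.exp_pos _).le (by positivity)
      calc ψd η ^ 2 * Real.exp (2 * |ψd η|) ≤ (s / 3 * t) ^ 2 * E := this
        _ = (s/3)^2 * t^2 * E := by ring
    -- key real inequality
    have hreal : (ψd η ^ 2 * Real.exp (2 * |ψd η|)) * (C / (t ^ d * φ t)) ≤
        (s / 3) ^ 2 * E * C * c * lam ^ β₂ * (r k ^ ((2:ℝ) - β₂) / (r (k+1)) ^ d) / φ lam := by
      have step1 : (ψd η ^ 2 * Real.exp (2 * |ψd η|)) * (C / (t ^ d * φ t)) ≤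
          ((s/3)^2 * t^2 * E) * (C / (t ^ d * φ t)) :=
        mul_le_mul_of_nonneg_right hP (by positivity)
      have step2 : ((s/3)^2 * t^2 * E) * (C / (t ^ d * φ t)) =
          ((s/3)^2 * E * C) * (t^2 / t^d) * (1 / φ t) := by ring
      have step3 : ((s/3)^2 * E * C) * (t^2 / t^d) * (1 / φ t) ≤
          ((s/3)^2 * E * C) * (t^2 / t^d) * (c * (lam / t) ^ β₂ / φ lam) :=
        mul_le_mul_of_nonneg_left hinv (by positivity)
      have hrw : t ^ 2 * (lam / t) ^ β₂ = lam ^ β₂ * t ^ ((2:ℝ) - β₂) := by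
        have h2 : t ^ (2:ℕ) = t ^ ((2:ℝ)) := by
          rw [← Real.rpow_natCast t 2]; norm_num
        rw [h2, Real.div_rpow hlam.le htpos.le, Real.rpow_sub htpos]
        ring
      have step4 : ((s/3)^2 * E * C) * (t^2 / t^d) * (c * (lam / t) ^ β₂ / φ lam) =
          ((s/3)^2 * E * C * c * lam ^ β₂ / φ lam) * (t ^ ((2:ℝ) - β₂) / t ^ d) := by
        calc ((s/3)^2 * E * C) * (t^2 / t^d) * (c * (lam / t) ^ β₂ / φ lam)
            = ((s/3)^2 * E * C * c / φ lam) * (t ^ 2 * (lam / t) ^ β₂) / t ^ d := by ring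
          _ = ((s/3)^2 * E * C * c / φ lam) * (lam ^ β₂ * t ^ ((2:ℝ) - β₂)) / t ^ d := by
              rw [hrw]
          _ = ((s/3)^2 * E * C * c * lam ^ β₂ / φ lam) * (t ^ ((2:ℝ) - β₂) / t ^ d) := by
              ring
      have step5 : ((s/3)^2 * E * C * c * lam ^ β₂ / φ lam) * (t ^ ((2:ℝ) - β₂) / t ^ d) ≤
          ((s/3)^2 * E * C * c * lam ^ β₂ / φ lam) *
            (r k ^ ((2:ℝ) - β₂) / (r (k+1)) ^ d) := by
        apply mul_le_mul_of_nonneg_left _ (by positivity)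
        apply div_le_div₀ (by positivity)
          (Real.rpow_le_rpow htpos.le ht1 (by linarith)) (by positivity)
          (pow_le_pow_left₀ (hrpos (k+1)).le ht2.le d)
      calc (ψd η ^ 2 * Real.exp (2 * |ψd η|)) * (C / (t ^ d * φ t))
          ≤ ((s/3)^2 * E * C) * (t^2 / t^d) * (1 / φ t) := by rw [← step2]; exact step1
        _ ≤ ((s/3)^2 * E * C) * (t^2 / t^d) * (c * (lam / t) ^ β₂ / φ lam) := step3
        _ = ((s/3)^2 * E * C * c * lam ^ β₂ / φ lam) * (t ^ ((2:ℝ) - β₂) / t ^ d) := step4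
        _ ≤ ((s/3)^2 * E * C * c * lam ^ β₂ / φ lam) *
              (r k ^ ((2:ℝ) - β₂) / (r (k+1)) ^ d) := step5
        _ = (s / 3) ^ 2 * E * C * c * lam ^ β₂ *
              (r k ^ ((2:ℝ) - β₂) / (r (k+1)) ^ d) / φ lam := by ring
    calc g η ≤ ENNReal.ofReal (ψd η ^ 2 * Real.exp (2 * |ψd η|)) *
          ENNReal.ofReal (C / (t ^ d * φ t)) := by
          exact mul_le_mul_right (hJ η ξ hne) _
      _ = ENNReal.ofReal ((ψd η ^ 2 * Real.exp (2 * |ψd η|)) * (C / (t ^ d * φ t))) :=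
          (ENNReal.ofReal_mul (by positivity)).symm
      _ ≤ _ := ENNReal.ofReal_le_ofReal hreal
  -- bound on each annulus integral
  have hann : ∀ k, (∫⁻ η in A k, g η) ≤ ENNReal.ofReal (M * q ^ k) * V := by
    intro k
    set B : ℝ := (s / 3) ^ 2 * E * C * c * lam ^ β₂ *
        (r k ^ ((2:ℝ) - β₂) / (r (k+1)) ^ d) / φ lam with hB
    have hB0 : 0 ≤ B := by positivity
    have hmeas : MeasurableSet (A k) :=
      (measurableSet_closedBall).diff measurableSet_closedBall
    have h1 : (∫⁻ η in A k, g η) ≤ ∫⁻ _ in A k, ENNReal.ofReal B :=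
      setLIntegral_mono' hmeas (hpoint k)
    have h2 : (∫⁻ _ in A k, ENNReal.ofReal B) = ENNReal.ofReal B * volume (A k) :=
      setLIntegral_const _ _
    have h3 : volume (A k) ≤ ENNReal.ofReal ((r k) ^ d) * V := by
      calc volume (A k) ≤ volume (Metric.closedBall ξ (r k)) :=
          measure_mono diff_subset
        _ = ENNReal.ofReal ((r k) ^ d) * V := by
          rw [Measure.addHaar_closedBall _ _ (hrpos k).le, finrank_euclideanSpace_fin]
    have key : B * (r k) ^ d = M * q ^ k := by
      have h2k : ((2:ℝ) ^ k) ^ ((2:ℝ) - β₂) = (q ^ k)⁻¹ := by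
        rw [← Real.rpow_natCast (2:ℝ) k,
          ← Real.rpow_mul (by norm_num : (0:ℝ) ≤ 2),
          ← Real.rpow_natCast q k, hq,
          ← Real.rpow_mul (by norm_num : (0:ℝ) ≤ 2),
          ← Real.rpow_neg (by norm_num : (0:ℝ) ≤ 2)]
        congr 1; ring
      have hrk : r k ^ ((2:ℝ) - β₂) = lam ^ ((2:ℝ) - β₂) * q ^ k := by
        show (lam / 2 ^ k) ^ ((2:ℝ) - β₂) = lam ^ ((2:ℝ) - β₂) * q ^ k
        rw [Real.div_rpow hlam.le (by positivity), h2k, div_inv_eq_mul]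
      have hlam2 : lam ^ β₂ * lam ^ ((2:ℝ) - β₂) = lam ^ 2 := by
        rw [← Real.rpow_add hlam, show β₂ + ((2:ℝ) - β₂) = ((2:ℕ):ℝ) by push_cast; ring,
          Real.rpow_natCast]
      have hrdiv : r k / r (k+1) = 2 := by
        show (lam / 2 ^ k) / (lam / 2 ^ (k+1)) = 2
        rw [pow_succ]
        field_simp
      have hrr : (r k) ^ d / (r (k+1)) ^ d = 2 ^ d := by
        rw [← div_pow, hrdiv]
      calc B * (r k) ^ d
          = (s/3)^2 * E * C * c * lam ^ β₂ * (r k ^ ((2:ℝ) - β₂)) *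
              ((r k) ^ d / (r (k+1)) ^ d) / φ lam := by rw [hB]; ring
        _ = (s/3)^2 * E * C * c * lam ^ β₂ * (lam ^ ((2:ℝ) - β₂) * q ^ k) *
              (2 ^ d) / φ lam := by rw [hrk, hrr]
        _ = (s/3)^2 * E * C * c * (lam ^ β₂ * lam ^ ((2:ℝ) - β₂)) * q ^ k *
              (2 ^ d) / φ lam := by ring
        _ = (s/3)^2 * E * C * c * lam ^ 2 * q ^ k * (2 ^ d) / φ lam := by rw [hlam2]
        _ = M * q ^ k := by rw [hM]; ring
    calc (∫⁻ η in A k, g η) ≤ ENNReal.ofReal B * volume (A k) := h2 ▸ h1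
      _ ≤ ENNReal.ofReal B * (ENNReal.ofReal ((r k) ^ d) * V) :=
        mul_le_mul_right h3 _
      _ = ENNReal.ofReal (B * (r k) ^ d) * V := by
        rw [← mul_assoc, ← ENNReal.ofReal_mul hB0]
      _ = ENNReal.ofReal (M * q ^ k) * V := by rw [key]
  -- covering of the ball
  have hcover : Metric.closedBall ξ lam ⊆ {ξ} ∪ ⋃ k, A k := by
    intro η hη
    by_cases hη0 : η = ξ
    · left; simp [hη0]
    · right
      set t : ℝ := dist η ξ with ht
      have htpos : 0 < t := dist_pos.mpr hη0
      have htlam : t ≤ lam := Metric.mem_closedBall.mp hη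
      have hex : ∃ n : ℕ, lam / 2 ^ (n + 1) < t := by
        obtain ⟨n, hn⟩ := pow_unbounded_of_one_lt (lam / t) (one_lt_two (α := ℝ))
        refine ⟨n, ?_⟩
        rw [div_lt_iff₀ (by positivity)]
        rw [div_lt_iff₀ htpos] at hn
        calc lam < t * 2 ^ n := by linarith [mul_comm ((2:ℝ)^n) t]
          _ ≤ t * 2 ^ (n + 1) := by
            apply mul_le_mul_of_nonneg_left _ htpos.le
            apply pow_le_pow_right₀ one_le_two (Nat.le_succ n)
      set k := Nat.find hex with hk
      have h1 : lam / 2 ^ (k + 1) < t := Nat.find_spec hex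
      have h2 : t ≤ lam / 2 ^ k := by
        rcases Nat.eq_zero_or_pos k with h | h
        · rw [h]; simpa using htlam
        · have h' := Nat.find_min hex (m := k - 1) (by omega)
          push_neg at h'
          rwa [Nat.sub_add_cancel h] at h'
      refine mem_iUnion.mpr ⟨k, Metric.mem_closedBall.mpr ?_, ?_⟩
      · show dist η ξ ≤ lam / 2 ^ k
        rw [← ht]; exact h2
      · intro hmem
        have h3 : dist η ξ ≤ lam / 2 ^ (k + 1) := Metric.mem_closedBall.mp hmem
        rw [← ht] at h3; linarith
  -- putting it together
  have hgξ : g ξ = 0 := by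
    rw [hg]; simp [hψd]
  calc (∫⁻ η in Metric.closedBall ξ lam, g η)
      ≤ ∫⁻ η in ({ξ} ∪ ⋃ k, A k), g η := lintegral_mono_set hcover
    _ ≤ (∫⁻ η in ({ξ} : Set _), g η) + ∫⁻ η in ⋃ k, A k, g η := lintegral_union_le _ _ _
    _ ≤ 0 + ∑' k, ∫⁻ η in A k, g η := by
        apply add_le_add
        · rw [lintegral_singleton, hgξ, zero_mul]
        · exact lintegral_iUnion_le _ _
    _ ≤ ∑' k, ENNReal.ofReal (M * q ^ k) * V := by
        rw [zero_add]; exact ENNReal.tsum_le_tsum hann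
    _ = ENNReal.ofReal M * (1 - ENNReal.ofReal q)⁻¹ * V := by
        have : ∀ k : ℕ, ENNReal.ofReal (M * q ^ k) * V =
            ENNReal.ofReal M * (ENNReal.ofReal q) ^ k * V := by
          intro k
          rw [ENNReal.ofReal_mul hM0, ENNReal.ofReal_pow hq0.le]
        simp_rw [this]
        rw [ENNReal.tsum_mul_right, ENNReal.tsum_mul_left, ENNReal.tsum_geometric]
    _ = ENNReal.ofReal M * T := by rw [hT]; ring
    _ = ENNReal.ofReal (M * T.toReal) := by
        rw [ENNReal.ofReal_mul hM0, ENNReal.ofReal_toReal hTlt.ne]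
    _ ≤ ENNReal.ofReal (C * c * 2 ^ d / 9 * T.toReal * s ^ 2 * E * lam ^ 2 / φ lam) := by
        apply ENNReal.ofReal_le_ofReal
        rw [hM]; apply le_of_eq; ring
end

section
/- Suppose p(t,x,y) ≤ c₁ t/(|x−y|^d φ(c₁|x−y|)) + c₂ t^{−d/2} exp(−c₃|x−y|²/t) for all t, with φ satisfying the (polycon) scaling conditions. Then there is c₈ > 0 such that for every s, t > 0 and x ∈ ℝ^d, ∫_{B(x,s)^c} p(t,x,y) dy ≤ c₈ t / φ̃(s), where φ̃(s) = s² ∧ φ(s). -/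
/-!
For `‖y - x‖ = r ≥ s`, the two-sided scaling of `φ` gives `φ (c₁ r) ≳ (r / s) ^ β₁ φ s`, and
`exp (-a) ≤ (m / a) ^ m` with `m = d / 2 + 1` trades the Gaussian factor for a power, so the kernel
is bounded by `(t s ^ β₁ / φ s) r ^ (-(d + β₁)) + t r ^ (-(d + 2))`. In polar coordinates
`∫_{r ≥ s} r ^ (-(d + β)) dy = d |B₁| s ^ (-β) / β`, and the two tails add up to
`t / φ s + t / s ^ 2 ≲ t / min (s ^ 2) (φ s)`.
-/

open MeasureTheory ENNReal Set

def LowerScaling (φ : ℝ → ℝ) (c β : ℝ) : Prop :=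
  ∀ r R : ℝ, 0 < r → r < R → c⁻¹ * (R / r) ^ β ≤ φ R / φ r

def UpperScaling (φ : ℝ → ℝ) (c β : ℝ) : Prop :=
  ∀ r R : ℝ, 0 < r → r < R → φ R / φ r ≤ c * (R / r) ^ β

section Scaling

variable {φ : ℝ → ℝ} {c β β' : ℝ}

theorem LowerScaling.mul_le (hφ : LowerScaling φ c β) (hc : 1 ≤ c) {r R : ℝ} (hr : 0 < r)
    (hφr : 0 < φ r) (hrR : r ≤ R) : c⁻¹ * (R / r) ^ β * φ r ≤ φ R := by
  rcases hrR.lt_or_eq with hrR | rfl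
  · exact (le_div_iff₀ hφr).1 (hφ r R hr hrR)
  · rw [div_self hr.ne', Real.one_rpow, mul_one]
    exact mul_le_of_le_one_left hφr.le (inv_le_one_of_one_le₀ hc)

theorem UpperScaling.inv_mul_rpow_mul_le (hφ : UpperScaling φ c β) (hc : 0 < c) {a r : ℝ}
    (ha : 0 < a) (ha1 : a < 1) (hr : 0 < r) (hφar : 0 < φ (a * r)) :
    c⁻¹ * a ^ β * φ r ≤ φ (a * r) := by
  have h := hφ (a * r) r (by positivity) (by nlinarith)
  rw [div_le_iff₀ hφar, show r / (a * r) = a⁻¹ by field_simp, Real.inv_rpow ha.le] at h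
  have haβ : 0 < a ^ β := by positivity
  calc c⁻¹ * a ^ β * φ r ≤ c⁻¹ * a ^ β * (c * (a ^ β)⁻¹ * φ (a * r)) := by gcongr
    _ = φ (a * r) := by field_simp

theorem LowerScaling.inv_mul_min_mul_le (hL : LowerScaling φ c β) (hU : UpperScaling φ c β')
    (hc : 1 ≤ c) (hβ : 0 ≤ β) (hpos : ∀ r, 0 < r → 0 < φ r) {a r : ℝ} (ha : 0 < a)
    (hr : 0 < r) : c⁻¹ * min 1 (a ^ β') * φ r ≤ φ (a * r) := by
  have hφr := hpos r hr
  rcases lt_or_ge a 1 with ha1 | ha1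
  · calc c⁻¹ * min 1 (a ^ β') * φ r ≤ c⁻¹ * a ^ β' * φ r := by gcongr; exact min_le_right _ _
      _ ≤ φ (a * r) := hU.inv_mul_rpow_mul_le (by linarith) ha ha1 hr (hpos _ (by positivity))
  · have h := hL.mul_le hc hr hφr (le_mul_of_one_le_left hr.le ha1)
    rw [mul_div_cancel_right₀ _ hr.ne'] at h
    calc c⁻¹ * min 1 (a ^ β') * φ r ≤ c⁻¹ * a ^ β * φ r := by
          gcongr
          exact (min_le_left _ _).trans (Real.one_le_rpow ha1 hβ)
      _ ≤ φ (a * r) := h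

theorem LowerScaling.div_pow_mul_apply_mul_le (hL : LowerScaling φ c β)
    (hU : UpperScaling φ c β') (hc : 1 ≤ c) (hβ : 0 ≤ β) (hpos : ∀ r, 0 < r → 0 < φ r)
    (n : ℕ) {a s r t : ℝ} (ha : 0 < a) (hs : 0 < s) (hsr : s ≤ r) (ht : 0 ≤ t) :
    a * t / (r ^ n * φ (a * r))
      ≤ a * c ^ 2 / min 1 (a ^ β') * (t * s ^ β / φ s) * r ^ (-(n + β)) := by
  have hr : 0 < r := hs.trans_le hsr
  have hφs := hpos s hs
  have hmin : 0 < min 1 (a ^ β') := lt_min one_pos (by positivity)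
  have hc0 : 0 < c := by linarith
  have hlow : c⁻¹ * min 1 (a ^ β') * (c⁻¹ * (r / s) ^ β * φ s) ≤ φ (a * r) :=
    (mul_le_mul_of_nonneg_left (hL.mul_le hc hs hφs hsr) (by positivity)).trans
      (hL.inv_mul_min_mul_le hU hc hβ hpos ha hr)
  calc a * t / (r ^ n * φ (a * r))
      ≤ a * t / (r ^ n * (c⁻¹ * min 1 (a ^ β') * (c⁻¹ * (r / s) ^ β * φ s))) := by
        gcongr
    _ = a * c ^ 2 / min 1 (a ^ β') * (t * s ^ β / φ s) * r ^ (-(n + β)) := by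
        rw [Real.div_rpow hr.le hs.le, Real.rpow_neg hr.le, Real.rpow_add hr, Real.rpow_natCast]
        field_simp

end Scaling

theorem Real.exp_neg_le_div_rpow {a m : ℝ} (ha : 0 < a) (hm : 0 < m) :
    Real.exp (-a) ≤ (m / a) ^ m := by
  have h : a / m ≤ Real.exp (a / m) := by linarith [Real.add_one_le_exp (a / m)]
  have h' : (a / m) ^ m ≤ Real.exp a := by
    calc (a / m) ^ m ≤ Real.exp (a / m) ^ m := by gcongr
      _ = Real.exp a := by rw [← Real.exp_mul, div_mul_cancel₀ _ hm.ne']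
  rw [Real.exp_neg, ← inv_div, Real.inv_rpow (by positivity)]
  exact inv_anti₀ (by positivity) h'

theorem rpow_neg_mul_exp_neg_sq_div_le (n : ℕ) {a t r : ℝ} (ha : 0 < a) (ht : 0 < t)
    (hr : 0 < r) :
    t ^ (-(n : ℝ) / 2) * Real.exp (-a * r ^ 2 / t)
      ≤ ((n / 2 + 1) / a) ^ ((n : ℝ) / 2 + 1) * t * r ^ (-(n + 2 : ℝ)) := by
  set m : ℝ := n / 2 + 1
  have hm : 0 < m := by positivity
  have hexp := Real.exp_neg_le_div_rpow (show 0 < a * r ^ 2 / t by positivity) hm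
  rw [show -a * r ^ 2 / t = -(a * r ^ 2 / t) by ring]
  calc t ^ (-(n : ℝ) / 2) * Real.exp (-(a * r ^ 2 / t))
      ≤ t ^ (-(n : ℝ) / 2) * (m / (a * r ^ 2 / t)) ^ m := by gcongr
    _ = (m / a) ^ m * t * r ^ (-(n + 2 : ℝ)) := by
        have hsplit : m / (a * r ^ 2 / t) = m / a * t * (r ^ 2)⁻¹ := by field_simp
        rw [hsplit, Real.mul_rpow (by positivity) (by positivity),
          Real.mul_rpow (by positivity) ht.le, Real.inv_rpow (by positivity),
          ← Real.rpow_natCast, ← Real.rpow_mul hr.le, ← Real.rpow_neg hr.le,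
          show -(n + 2 : ℝ) = -((2 : ℕ) * m) by simp [m]; ring]
        have htm : t ^ (-(n : ℝ) / 2) * t ^ m = t := by
          rw [← Real.rpow_add ht, show -(n : ℝ) / 2 + m = 1 by simp only [m]; ring, Real.rpow_one]
        linear_combination (m / a) ^ m * r ^ (-((2 : ℕ) * m)) * htm

theorem LowerScaling.div_add_gaussian_le {φ : ℝ → ℝ} {c β β' c₁ c₂ c₃ : ℝ}
    (hL : LowerScaling φ c β) (hU : UpperScaling φ c β') (hc : 1 ≤ c) (hβ : 0 ≤ β)
    (hpos : ∀ r, 0 < r → 0 < φ r) (hc₁ : 0 < c₁) (hc₂ : 0 ≤ c₂) (hc₃ : 0 < c₃) (n : ℕ)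
    {s r t : ℝ} (hs : 0 < s) (hsr : s ≤ r) (ht : 0 < t) :
    c₁ * t / (r ^ n * φ (c₁ * r)) + c₂ * t ^ (-(n : ℝ) / 2) * Real.exp (-c₃ * r ^ 2 / t)
      ≤ c₁ * c ^ 2 / min 1 (c₁ ^ β') * (t * s ^ β / φ s) * r ^ (-(n + β))
        + c₂ * ((n / 2 + 1) / c₃) ^ ((n : ℝ) / 2 + 1) * t * r ^ (-(n + 2 : ℝ)) := by
  refine add_le_add (hL.div_pow_mul_apply_mul_le hU hc hβ hpos n hc₁ hs hsr ht.le) ?_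
  calc c₂ * t ^ (-(n : ℝ) / 2) * Real.exp (-c₃ * r ^ 2 / t)
      = c₂ * (t ^ (-(n : ℝ) / 2) * Real.exp (-c₃ * r ^ 2 / t)) := mul_assoc _ _ _
    _ ≤ c₂ * (((n / 2 + 1) / c₃) ^ ((n : ℝ) / 2 + 1) * t * r ^ (-(n + 2 : ℝ))) :=
        mul_le_mul_of_nonneg_left
          (rpow_neg_mul_exp_neg_sq_div_le n hc₃ ht (hs.trans_le hsr)) hc₂
    _ = _ := by ring

section Tail

variable {E : Type*} [NormedAddCommGroup E] [NormedSpace ℝ E] [FiniteDimensional ℝ E]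
  [MeasurableSpace E] [BorelSpace E] [Nontrivial E] (μ : Measure E) [μ.IsAddHaarMeasure]

theorem lintegral_compl_ball_norm_sub_rpow_neg {β s : ℝ} (hβ : 0 < β) (hs : 0 < s) (x : E) :
    ∫⁻ y in (Metric.ball x s)ᶜ, ENNReal.ofReal (‖y - x‖ ^ (-(Module.finrank ℝ E + β))) ∂μ
      = ENNReal.ofReal (Module.finrank ℝ E * μ.real (Metric.ball 0 1) / β * s ^ (-β)) := by
  set n := Module.finrank ℝ E
  set g : ℝ → ℝ := (Ici s).indicator fun r => r ^ (-(n + β))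
  have hradial : EqOn (fun r => r ^ (n - 1) • g r) ((Ici s).indicator fun r => r ^ (-β - 1))
      (Ioi 0) := by
    intro r (hr : 0 < r)
    by_cases hsr : s ≤ r
    · have hn : ((n - 1 : ℕ) : ℝ) = n - 1 := by
        rw [Nat.cast_sub Module.finrank_pos, Nat.cast_one]
      simp only [g, indicator_of_mem (mem_Ici.2 hsr), smul_eq_mul]
      rw [← Real.rpow_natCast, hn, ← Real.rpow_add hr]
      ring_nf
    · simp [g, hsr]
  have hint : IntegrableOn (fun r : ℝ => r ^ (-β - 1)) (Ici s) :=
    (integrableOn_Ici_iff_integrableOn_Ioi).2 (integrableOn_Ioi_rpow_of_lt (by linarith) hs)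
  have hg_int : Integrable (fun y : E => g ‖y‖) μ := by
    rw [integrable_fun_norm_addHaar, integrableOn_congr_fun hradial measurableSet_Ioi]
    exact (hint.integrable_indicator measurableSet_Ici).integrableOn
  have hg_integral : ∫ y, g ‖y‖ ∂μ = n * μ.real (Metric.ball 0 1) / β * s ^ (-β) := by
    rw [integral_fun_norm_addHaar, setIntegral_congr_fun measurableSet_Ioi hradial,
      setIntegral_indicator measurableSet_Ici, inter_eq_right.2 (Ici_subset_Ioi.2 hs),
      integral_Ici_eq_integral_Ioi, integral_Ioi_rpow_of_lt (by linarith) hs]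
    simp only [nsmul_eq_mul, smul_eq_mul, sub_add_cancel]
    field_simp
    ring
  have hindicator : ∀ y, (Metric.ball x s)ᶜ.indicator
      (fun y => ENNReal.ofReal (‖y - x‖ ^ (-(n + β)))) y = ENNReal.ofReal (g ‖y - x‖) := by
    intro y
    by_cases hy : s ≤ ‖y - x‖
    · have : y ∈ (Metric.ball x s)ᶜ := by simpa [dist_eq_norm] using hy
      simp [g, hy, this]
    · have : y ∉ (Metric.ball x s)ᶜ := by simpa [dist_eq_norm] using hy
      simp [g, hy, this]
  rw [← lintegral_indicator measurableSet_ball.compl, funext hindicator,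
    lintegral_sub_right_eq_self (fun y => ENNReal.ofReal (g ‖y‖)) x,
    ← ofReal_integral_eq_lintegral_ofReal hg_int (.of_forall fun y => indicator_nonneg
      (fun r (hr : s ≤ r) => Real.rpow_nonneg (hs.trans_le hr).le _) _), hg_integral]

theorem lintegral_compl_ball_le_of_le_add_rpow {f : E → ℝ} {β β' s K K' : ℝ} (hβ : 0 < β)
    (hβ' : 0 < β') (hs : 0 < s) (hK : 0 ≤ K) (hK' : 0 ≤ K') (x : E)
    (hf : ∀ y ∈ (Metric.ball x s)ᶜ, f y ≤ K * ‖y - x‖ ^ (-(Module.finrank ℝ E + β))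
      + K' * ‖y - x‖ ^ (-(Module.finrank ℝ E + β'))) :
    ∫⁻ y in (Metric.ball x s)ᶜ, ENNReal.ofReal (f y) ∂μ
      ≤ ENNReal.ofReal (K * (Module.finrank ℝ E * μ.real (Metric.ball 0 1) / β * s ^ (-β))
        + K' * (Module.finrank ℝ E * μ.real (Metric.ball 0 1) / β' * s ^ (-β'))) := by
  set n := Module.finrank ℝ E
  have hnorm_rpow : ∀ γ : ℝ, ∀ y ∈ (Metric.ball x s)ᶜ, 0 ≤ ‖y - x‖ ^ γ :=
    fun γ y _ => Real.rpow_nonneg (norm_nonneg _) γ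
  calc ∫⁻ y in (Metric.ball x s)ᶜ, ENNReal.ofReal (f y) ∂μ
      ≤ ∫⁻ y in (Metric.ball x s)ᶜ, (ENNReal.ofReal K * ENNReal.ofReal (‖y - x‖ ^ (-(n + β)))
          + ENNReal.ofReal K' * ENNReal.ofReal (‖y - x‖ ^ (-(n + β')))) ∂μ := by
        refine setLIntegral_mono' measurableSet_ball.compl fun y hy => ?_
        rw [← ofReal_mul hK, ← ofReal_mul hK',
          ← ofReal_add (mul_nonneg hK (hnorm_rpow _ y hy)) (mul_nonneg hK' (hnorm_rpow _ y hy))]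
        exact ofReal_le_ofReal (hf y hy)
    _ = _ := by
        rw [lintegral_add_left (by fun_prop), lintegral_const_mul' _ _ ofReal_ne_top,
          lintegral_const_mul' _ _ ofReal_ne_top, lintegral_compl_ball_norm_sub_rpow_neg μ hβ hs,
          lintegral_compl_ball_norm_sub_rpow_neg μ hβ' hs, ← ofReal_mul hK, ← ofReal_mul hK',
          ← ofReal_add (by positivity) (by positivity)]

end Tail

theorem div_add_div_le_add_div_min {P Q u v : ℝ} (hP : 0 ≤ P) (hQ : 0 ≤ Q) (hu : 0 < u)
    (hv : 0 < v) : P / u + Q / v ≤ (P + Q) / min u v := by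
  rw [add_div]
  exact add_le_add (div_le_div_of_nonneg_left hP (lt_min hu hv) (min_le_left _ _))
    (div_le_div_of_nonneg_left hQ (lt_min hu hv) (min_le_right _ _))

theorem stmt_11_general (d : ℕ) (hd : 1 ≤ d) (c β₁ β₂ c₁ c₂ c₃ : ℝ)
    (hc : 1 ≤ c) (hβ₁ : 0 < β₁)
    (hc₁ : 0 < c₁) (hc₂ : 0 < c₂) (hc₃ : 0 < c₃)
    (φ : ℝ → ℝ)
    (hpos : ∀ s : ℝ, 0 < s → 0 < φ s)
    (hscale : ∀ r R : ℝ, 0 < r → r < R →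
      c⁻¹ * (R / r) ^ β₁ ≤ φ R / φ r ∧ φ R / φ r ≤ c * (R / r) ^ β₂)
    (p : ℝ → EuclideanSpace ℝ (Fin d) → EuclideanSpace ℝ (Fin d) → ℝ)
    (hub : ∀ (t : ℝ) x y, 0 < t → x ≠ y →
      p t x y ≤ c₁ * t / (‖x - y‖ ^ d * φ (c₁ * ‖x - y‖))
        + c₂ * t ^ (-(d : ℝ) / 2) * Real.exp (-c₃ * ‖x - y‖ ^ 2 / t)) :
    ∃ c₈ : ℝ, 0 < c₈ ∧ ∀ s t : ℝ, 0 < s → 0 < t →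
      ∀ x : EuclideanSpace ℝ (Fin d),
        ∫⁻ y in (Metric.ball x s)ᶜ, ENNReal.ofReal (p t x y)
          ≤ ENNReal.ofReal (c₈ * t / min (s ^ 2) (φ s)) := by
  have : Nonempty (Fin d) := ⟨⟨0, hd⟩⟩
  have hL : LowerScaling φ c β₁ := fun r R hr hrR => (hscale r R hr hrR).1
  have hU : UpperScaling φ c β₂ := fun r R hr hrR => (hscale r R hr hrR).2
  set V := volume.real (Metric.ball (0 : EuclideanSpace ℝ (Fin d)) 1)
  have hV : 0 < V := toReal_pos (Metric.measure_ball_pos _ _ one_pos).ne' measure_ball_lt_top.ne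
  set A := c₁ * c ^ 2 / min 1 (c₁ ^ β₂) * (d * V / β₁)
  set B := c₂ * ((d / 2 + 1) / c₃) ^ ((d : ℝ) / 2 + 1) * (d * V / 2)
  refine ⟨A + B, by positivity, fun s t hs ht x => ?_⟩
  have hφs := hpos s hs
  set K₁ := c₁ * c ^ 2 / min 1 (c₁ ^ β₂) * (t * s ^ β₁ / φ s)
  set K₂ := c₂ * ((d / 2 + 1) / c₃) ^ ((d : ℝ) / 2 + 1) * t
  have hbound : ∀ y ∈ (Metric.ball x s)ᶜ,
      p t x y ≤ K₁ * ‖y - x‖ ^ (-(d + β₁)) + K₂ * ‖y - x‖ ^ (-(d + 2 : ℝ)) := by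
    intro y hy
    have hsr : s ≤ ‖x - y‖ := by simpa [dist_eq_norm'] using hy
    have hxy : x ≠ y := by rintro rfl; simp at hsr; linarith
    rw [← norm_sub_rev x y]
    exact (hub t x y ht hxy).trans
      (hL.div_add_gaussian_le hU hc hβ₁.le hpos hc₁ hc₂.le hc₃ d hs hsr ht)
  have htail := lintegral_compl_ball_le_of_le_add_rpow volume hβ₁ two_pos hs
    (by positivity : 0 ≤ K₁) (by positivity : 0 ≤ K₂) x (by rwa [finrank_euclideanSpace_fin])
  rw [finrank_euclideanSpace_fin] at htail
  calc ∫⁻ y in (Metric.ball x s)ᶜ, ENNReal.ofReal (p t x y)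
      ≤ ENNReal.ofReal (K₁ * (d * V / β₁ * s ^ (-β₁)) + K₂ * (d * V / 2 * s ^ (-2 : ℝ))) := htail
    _ = ENNReal.ofReal (A * t / φ s + B * t / s ^ 2) := by
        rw [Real.rpow_neg hs.le, Real.rpow_neg hs.le, Real.rpow_two]
        congr 1
        simp only [A, B, K₁, K₂]
        field_simp
    _ ≤ ENNReal.ofReal ((A + B) * t / min (s ^ 2) (φ s)) := by
        rw [add_mul, min_comm]
        exact ofReal_le_ofReal (div_add_div_le_add_div_min (by positivity) (by positivity) hφs
          (by positivity))

theorem stmt_11 (d : ℕ) (hd : 1 ≤ d) (c β₁ β₂ c₁ c₂ c₃ : ℝ)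
    (hc : 1 ≤ c) (hβ₁ : 0 < β₁) (hβ₁₂ : β₁ ≤ β₂) (hβ₂ : β₂ < 2)
    (hc₁ : 0 < c₁) (hc₂ : 0 < c₂) (hc₃ : 0 < c₃)
    (φ : ℝ → ℝ)
    (hpos : ∀ s : ℝ, 0 < s → 0 < φ s)
    (hmono : StrictMonoOn φ (Set.Ioi (0 : ℝ)))
    (hone : φ 1 = 1)
    (hscale : ∀ r R : ℝ, 0 < r → r < R →
      c⁻¹ * (R / r) ^ β₁ ≤ φ R / φ r ∧ φ R / φ r ≤ c * (R / r) ^ β₂)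
    (p : ℝ → EuclideanSpace ℝ (Fin d) → EuclideanSpace ℝ (Fin d) → ℝ)
    (hpnn : ∀ t x y, 0 ≤ p t x y)
    (hub : ∀ (t : ℝ) x y, 0 < t → x ≠ y →
      p t x y ≤ c₁ * t / (‖x - y‖ ^ d * φ (c₁ * ‖x - y‖))
        + c₂ * t ^ (-(d : ℝ) / 2) * Real.exp (-c₃ * ‖x - y‖ ^ 2 / t)) :
    ∃ c₈ : ℝ, 0 < c₈ ∧ ∀ s t : ℝ, 0 < s → 0 < t →
      ∀ x : EuclideanSpace ℝ (Fin d),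
        ∫⁻ y in (Metric.ball x s)ᶜ, ENNReal.ofReal (p t x y)
          ≤ ENNReal.ofReal (c₈ * t / min (s ^ 2) (φ s)) :=
  stmt_11_general d hd c β₁ β₂ c₁ c₂ c₃ hc hβ₁ hc₁ hc₂ hc₃ φ hpos hscale p hub
end

section
/- Define F(r,λ,s,t,R) := exp(−sR/3 + C₊(s² + e^{sλ}/φ_r(λ)) t). Suppose φ_r satisfies the (polycon) scaling conditions with constants uniform in r, let H = β₁/(12(d+β₁)) and K = H/(6C₊). If e^{K R²/t} ≥ a φ_r(R)/t and R² ≥ t, then with λ = HR and s = (HR)^{−1} log(e φ_r(R)/t) > 0, we have F(r,λ,s,t,R) ≤ C (t/φ_r(R))^{d/β₁ + 1} for a constant C independent of r, t, R. -/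
set_option maxHeartbeats 2000000 in
theorem stmt_13 (d : ℕ) (hd : 1 ≤ d) (Cstar c β₁ β₂ : ℝ)
    (hC : 0 < Cstar) (hc : 1 ≤ c) (hβ₁ : 0 < β₁) (hβ₁₂ : β₁ ≤ β₂) (hβ₂ : β₂ < 2) :
    ∃ C : ℝ, 0 < C ∧ ∀ φr : ℝ → ℝ,
      (∀ x : ℝ, 0 < x → 0 < φr x) →
      (∀ ρ R : ℝ, 0 < ρ → ρ < R →
        c⁻¹ * (R / ρ) ^ β₁ ≤ φr R / φr ρ ∧ φr R / φr ρ ≤ c * (R / ρ) ^ β₂) →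
      ∀ t R : ℝ, 0 < t → 0 < R → t ≤ R ^ 2 →
        (let H := β₁ / (12 * ((d : ℝ) + β₁));
         let K := H / (6 * Cstar);
         let a := Real.exp 1 * K / c;
         a * φr R / t ≤ Real.exp (K * R ^ 2 / t) →
         t < Real.exp 1 * φr R →
         (let lam := H * R;
          let s := (H * R)⁻¹ * Real.log (Real.exp 1 * φr R / t);
          0 < s ∧
          Real.exp (-(s * R) / 3 + Cstar * (s ^ 2 + Real.exp (s * lam) / φr lam) * t)
            ≤ C * (t / φr R) ^ ((d : ℝ) / β₁ + 1))) := by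
  have hd' : (1:ℝ) ≤ (d:ℝ) := by exact_mod_cast hd
  set H0 : ℝ := β₁ / (12 * ((d : ℝ) + β₁)) with hH0
  have hH0pos : 0 < H0 := by rw [hH0]; positivity
  have hH0lt : H0 < 1 := by
    rw [hH0, div_lt_one (by linarith)]; linarith
  set K0 : ℝ := H0 / (6 * Cstar) with hK0
  have hK0pos : 0 < K0 := by rw [hK0]; positivity
  set M0 : ℝ := max (Real.log (c / K0)) 0 with hM0
  have hM0nn : 0 ≤ M0 := le_max_right _ _
  refine ⟨Real.exp (25 * Cstar * M0 ^ 2 / H0 ^ 2 + Cstar * Real.exp 1 * c * (H0⁻¹) ^ β₂),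
    Real.exp_pos _, ?_⟩
  intro φr hφ hsc t R ht hR htR
  intro H K a hA hB lam s
  have hHe : H = H0 := rfl
  have hKe : K = K0 := rfl
  have hae : a = Real.exp 1 * K0 / c := rfl
  have hlame : lam = H0 * R := rfl
  set L : ℝ := Real.log (Real.exp 1 * φr R / t) with hLdef
  have hse : s = (H0 * R)⁻¹ * L := rfl
  rw [hKe] at hA
  clear_value s lam a K H L M0 K0 H0
  have hφR : 0 < φr R := hφ R hR
  have hratio : 1 < Real.exp 1 * φr R / t := (one_lt_div ht).2 hB
  have hL : 0 < L := hLdef ▸ Real.log_pos hratio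
  constructor
  · rw [hse]
    exact mul_pos (inv_pos.2 (mul_pos hH0pos hR)) hL
  -- main inequality
  have hR2 : (0:ℝ) < R ^ 2 := by positivity
  have hslam : s * lam = L := by
    rw [hse, hlame]; field_simp [hH0pos.ne', hR.ne']
  have hsR : s * R = L / H0 := by
    rw [hse]; field_simp [hH0pos.ne', hR.ne']
  have hexpslam : Real.exp (s * lam) = Real.exp 1 * φr R / t := by
    rw [hslam, hLdef]; exact Real.exp_log (by positivity)
  -- log identities
  have hLexpand : L = 1 + Real.log (φr R) - Real.log t := by
    rw [hLdef, Real.log_div (by positivity) (ne_of_gt ht),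
      Real.log_mul (Real.exp_ne_zero 1) (ne_of_gt hφR), Real.log_exp]
  have hlog1 : Real.log (t / φr R) = 1 - L := by
    rw [Real.log_div (ne_of_gt ht) (ne_of_gt hφR)]
    linarith
  -- bound on L from hA
  have hapos : 0 < a := by rw [hae]; positivity
  have hLbound : L ≤ K0 * R ^ 2 / t + M0 := by
    have h1 : 0 < a * φr R / t := by positivity
    have h2 : Real.log (a * φr R / t) ≤ K0 * R ^ 2 / t :=
      (Real.log_le_iff_le_exp h1).2 hA
    have h3 : Real.log (a * φr R / t)
        = Real.log a + Real.log (φr R) - Real.log t := by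
      rw [Real.log_div (by positivity) (ne_of_gt ht),
        Real.log_mul (ne_of_gt hapos) (ne_of_gt hφR)]
    have h4 : Real.log a = 1 - Real.log (c / K0) := by
      rw [hae, Real.log_div (by positivity) (by linarith),
        Real.log_mul (Real.exp_ne_zero 1) (ne_of_gt hK0pos), Real.log_exp,
        Real.log_div (by linarith) (ne_of_gt hK0pos)]
      ring
    have h5 : Real.log (c / K0) ≤ M0 := by rw [hM0]; exact le_max_left _ _
    linarith
  -- term2 bound
  have hs2 : s ^ 2 * t = L ^ 2 * t / (H0 ^ 2 * R ^ 2) := by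
    rw [hse]; field_simp [hH0pos.ne', hR.ne']
  have hCK : Cstar * K0 = H0 / 6 := by
    rw [hK0]; field_simp [hC.ne']
  have hterm2 : Cstar * (s ^ 2 * t) ≤ 5 / 24 * L / H0 + 25 * Cstar * M0 ^ 2 / H0 ^ 2 := by
    rcases le_or_gt M0 (K0 * R ^ 2 / t / 4) with hcase | hcase
    · -- L ≤ (5/4) K0 R^2 / t
      have hL54 : L * t ≤ 5 / 4 * K0 * R ^ 2 := by
        have : L ≤ 5 / 4 * (K0 * R ^ 2 / t) := by linarith
        calc L * t ≤ 5 / 4 * (K0 * R ^ 2 / t) * t :=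
            mul_le_mul_of_nonneg_right this ht.le
          _ = 5 / 4 * K0 * R ^ 2 := by field_simp [ht.ne']
      have h7 : Cstar * L * (L * t) ≤ Cstar * L * (5 / 4 * K0 * R ^ 2) :=
        mul_le_mul_of_nonneg_left hL54 (by positivity)
      have key : Cstar * (L ^ 2 * t) ≤ 5 / 24 * L * H0 * R ^ 2 := by
        calc Cstar * (L ^ 2 * t) = Cstar * L * (L * t) := by ring
          _ ≤ Cstar * L * (5 / 4 * K0 * R ^ 2) := h7
          _ = 5 / 4 * L * R ^ 2 * (Cstar * K0) := by ring
          _ = 5 / 4 * L * R ^ 2 * (H0 / 6) := by rw [hCK]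
          _ = 5 / 24 * L * H0 * R ^ 2 := by ring
      rw [hs2]
      have hpos : (0:ℝ) < H0 ^ 2 * R ^ 2 := by positivity
      rw [mul_div_assoc', div_le_iff₀ hpos]
      have heq : (5 / 24 * L / H0 + 25 * Cstar * M0 ^ 2 / H0 ^ 2) * (H0 ^ 2 * R ^ 2)
          = 5 / 24 * L * H0 * R ^ 2 + 25 * Cstar * M0 ^ 2 * R ^ 2 := by
        field_simp [hH0pos.ne']
      rw [heq]
      have h12 : (0:ℝ) ≤ 25 * Cstar * M0 ^ 2 * R ^ 2 := by positivity
      linarith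
    · -- L ≤ 5 M0, t ≤ R^2
      have hL5 : L ≤ 5 * M0 := by
        have : K0 * R ^ 2 / t < 4 * M0 := by linarith
        linarith
      rw [hs2]
      have hpos : (0:ℝ) < H0 ^ 2 * R ^ 2 := by positivity
      rw [mul_div_assoc', div_le_iff₀ hpos]
      have hLsq : L ^ 2 ≤ 25 * M0 ^ 2 := by
        calc L ^ 2 ≤ (5 * M0) ^ 2 := pow_le_pow_left₀ hL.le hL5 2
          _ = 25 * M0 ^ 2 := by ring
      have h9' : L ^ 2 * t ≤ 25 * M0 ^ 2 * R ^ 2 :=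
        mul_le_mul hLsq htR ht.le (by positivity)
      have h9 : Cstar * (L ^ 2 * t) ≤ 25 * Cstar * M0 ^ 2 * R ^ 2 := by
        calc Cstar * (L ^ 2 * t) ≤ Cstar * (25 * M0 ^ 2 * R ^ 2) :=
              mul_le_mul_of_nonneg_left h9' hC.le
          _ = 25 * Cstar * M0 ^ 2 * R ^ 2 := by ring
      have h10 : 0 ≤ 5 / 24 * L / H0 * (H0 ^ 2 * R ^ 2) := by positivity
      have heq : (5 / 24 * L / H0 + 25 * Cstar * M0 ^ 2 / H0 ^ 2) * (H0 ^ 2 * R ^ 2)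
          = 5 / 24 * L / H0 * (H0 ^ 2 * R ^ 2) + 25 * Cstar * M0 ^ 2 * R ^ 2 := by
        field_simp [hH0pos.ne']
      rw [heq]
      linarith
  -- term3 bound
  have hHRpos : 0 < H0 * R := mul_pos hH0pos hR
  have hHRlt : H0 * R < R := (mul_lt_iff_lt_one_left hR).2 hH0lt
  have hφHR : 0 < φr (H0 * R) := hφ _ hHRpos
  have hsc' : φr R / φr (H0 * R) ≤ c * (H0⁻¹) ^ β₂ := by
    have h := (hsc (H0 * R) R hHRpos hHRlt).2
    have hRdiv : R / (H0 * R) = H0⁻¹ := by rw [mul_comm]; field_simp [hR.ne']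
    rwa [hRdiv] at h
  have hterm3 : Cstar * (Real.exp (s * lam) / φr lam) * t
      ≤ Cstar * Real.exp 1 * c * (H0⁻¹) ^ β₂ := by
    rw [hexpslam, hlame]
    have h1 : Real.exp 1 * φr R / t / φr (H0 * R) * t
        = Real.exp 1 * (φr R / φr (H0 * R)) := by
      field_simp [ht.ne', hφHR.ne']
    calc Cstar * (Real.exp 1 * φr R / t / φr (H0 * R)) * t
        = Cstar * (Real.exp 1 * (φr R / φr (H0 * R))) := by rw [mul_assoc, h1]
      _ ≤ Cstar * (Real.exp 1 * (c * (H0⁻¹) ^ β₂)) :=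
          mul_le_mul_of_nonneg_left
            (mul_le_mul_of_nonneg_left hsc' (Real.exp_pos 1).le) hC.le
      _ = Cstar * Real.exp 1 * c * (H0⁻¹) ^ β₂ := by ring
  -- relation between p and H0
  have hppos : 0 < (d:ℝ) / β₁ + 1 := by positivity
  have h1H : H0⁻¹ = 12 * ((d:ℝ) / β₁ + 1) := by
    rw [hH0]; field_simp
  -- assemble
  rw [Real.rpow_def_of_pos (by positivity : (0:ℝ) < t / φr R), ← Real.exp_add,
    Real.exp_le_exp]
  have hLH : L / H0 = L * (12 * ((d:ℝ) / β₁ + 1)) := by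
    rw [div_eq_mul_inv, h1H]
  have hmain : -(L / H0) / 3 + 5 / 24 * (L / H0)
      ≤ Real.log (t / φr R) * ((d:ℝ) / β₁ + 1) := by
    rw [hlog1, hLH]
    linarith [mul_pos hppos hL, hppos]
  have hexpand : Cstar * (s ^ 2 + Real.exp (s * lam) / φr lam) * t
      = Cstar * (s ^ 2 * t) + Cstar * (Real.exp (s * lam) / φr lam) * t := by ring
  rw [hsR, hexpand]
  have hbridge : 5 / 24 * L / H0 = 5 / 24 * (L / H0) := mul_div_assoc _ _ _
  linarith [hterm2, hterm3, hmain, hbridge]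
end

section
/- Let u, v be functions on ℝ^{d+1} (space-time) and suppose Γ_λ[v](ξ) := Σ a_{ij}(ξ) ∂_i v ∂_j v (ξ) + ∫_{|η−ξ|≤λ} (v(η)−v(ξ))² J(η,ξ) dη with A = (a_{ij}) uniformly elliptic with constant c: c^{-1}|ζ|² ≤ ζ·A(ξ)ζ ≤ c|ζ|². For ψ(ξ) = s(|ξ−x| ∧ |x−y|) (Lipschitz with constant s) and J(η,ξ) ≤ κ₀|η−ξ|^{−d−β} for |η−ξ| ≤ λ ≤ δ₀ with β ∈ (0,2), we have e^{−2ψ(ξ)} Γ_λ[e^ψ](ξ) ≤ C s² (1 + e^{2λs} δ(λ)) for all ξ, where δ(λ) := sup_ξ ∫_{|η−ξ|≤λ}|η−ξ|² J(η,ξ) dη and C depends only on c. -/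
open MeasureTheory ENNReal

open Real NNReal

/-!
The weight `ψ ξ = s * min ‖ξ - x‖ ‖x - y‖` is `s`-Lipschitz.
The gradient of `exp ∘ ψ` has norm at most `s * exp ψ`, so ellipticity bounds the local part of
`exp (-2ψ) Γ_λ[exp ψ]` by `c s²`. For the jump part,
`exp (-2 ψ ξ) (exp ψ η - exp ψ ξ)² = (1 - exp w)²` with `w = ψ η - ψ ξ`, `|w| ≤ s ‖η - ξ‖ ≤ s λ`,
and `(1 - exp w)² ≤ w² exp (2|w|)`. Hence one may take `C = c`.
-/

theorem one_sub_exp_sq_le (w : ℝ) : (1 - exp w) ^ 2 ≤ w ^ 2 * exp (2 * |w|) := by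
  have habs : |1 - exp w| ≤ |w| * exp |w| := by
    rcases le_total 0 w with hw | hw
    · have hinv : exp (-w) * exp w = 1 := by rw [← exp_add, neg_add_cancel, exp_zero]
      rw [abs_of_nonpos (by linarith [one_le_exp hw]), abs_of_nonneg hw]
      nlinarith [add_one_le_exp (-w), exp_pos w, hinv]
    · rw [abs_of_nonneg (by linarith [exp_le_one_iff.2 hw]), abs_of_nonpos hw]
      nlinarith [add_one_le_exp w, one_le_exp (neg_nonneg.2 hw)]
  calc (1 - exp w) ^ 2 = |1 - exp w| ^ 2 := (sq_abs _).symm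
    _ ≤ (|w| * exp |w|) ^ 2 := pow_le_pow_left₀ (abs_nonneg _) habs 2
    _ = w ^ 2 * exp (2 * |w|) := by rw [mul_pow, sq_abs, ← exp_nat_mul]; norm_num

theorem lipschitzWith_mul_min_norm_sub {E : Type*} [SeminormedAddCommGroup E] (s : ℝ≥0) (x : E)
    (r : ℝ) :
    LipschitzWith s (fun ζ => (s : ℝ) * min ‖ζ - x‖ r) := by
  have := (lipschitzWith_smul (s : ℝ)).comp ((LipschitzWith.dist_left x).min_const r)
  simpa [Function.comp_def, dist_eq_norm] using this

theorem LipschitzWith.exp_neg_two_mul_sq_exp_sub_le {E : Type*} [SeminormedAddCommGroup E]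
    {f : E → ℝ} {K : ℝ≥0} (hf : LipschitzWith K f) (η ξ : E) :
    exp (-2 * f ξ) * (exp (f η) - exp (f ξ)) ^ 2 ≤ K ^ 2 * ‖η - ξ‖ ^ 2 * exp (2 * K * ‖η - ξ‖) := by
  have hw : |f η - f ξ| ≤ K * ‖η - ξ‖ := by
    simpa only [dist_eq_norm, Real.norm_eq_abs] using hf.dist_le_mul η ξ
  have hrescale : exp (-2 * f ξ) * (exp (f η) - exp (f ξ)) ^ 2 = (1 - exp (f η - f ξ)) ^ 2 := by
    rw [exp_sub, show -2 * f ξ = -(f ξ + f ξ) by ring, exp_neg, exp_add]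
    field_simp
    ring
  calc exp (-2 * f ξ) * (exp (f η) - exp (f ξ)) ^ 2 = (1 - exp (f η - f ξ)) ^ 2 := hrescale
    _ ≤ (f η - f ξ) ^ 2 * exp (2 * |f η - f ξ|) := one_sub_exp_sq_le _
    _ ≤ (K * ‖η - ξ‖) ^ 2 * exp (2 * (K * ‖η - ξ‖)) := by
        rw [← sq_abs (f η - f ξ)]
        gcongr
    _ = K ^ 2 * ‖η - ξ‖ ^ 2 * exp (2 * K * ‖η - ξ‖) := by ring_nf

theorem LipschitzWith.norm_fderiv_exp_comp_le {E : Type*} [NormedAddCommGroup E]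
    [NormedSpace ℝ E] {f : E → ℝ} {K : ℝ≥0} (hf : LipschitzWith K f) (x : E) :
    ‖fderiv ℝ (fun y => exp (f y)) x‖ ≤ K * exp (f x) := by
  by_cases hdiff : DifferentiableAt ℝ f x
  · rw [fderiv_exp hdiff, norm_smul, Real.norm_of_nonneg (exp_pos _).le, mul_comm]
    exact mul_le_mul_of_nonneg_right (norm_fderiv_le_of_lipschitz ℝ hf) (exp_pos _).le
  · -- `f = log ∘ exp ∘ f`, so `exp ∘ f` is not differentiable at `x` either.
    have : ¬DifferentiableAt ℝ (fun y => exp (f y)) x := fun h => hdiff <| by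
      simpa using h.log (exp_pos _).ne'
    rw [fderiv_zero_of_not_differentiableAt this, norm_zero]
    positivity

theorem LipschitzWith.exp_neg_two_mul_inner_gradient_exp_le {E : Type*} [NormedAddCommGroup E]
    [InnerProductSpace ℝ E] [CompleteSpace E] {f : E → ℝ} {K : ℝ≥0} (hf : LipschitzWith K f)
    (A : E →L[ℝ] E) {c : ℝ} (hc : 0 ≤ c) (hA : ∀ ζ, inner ℝ (A ζ) ζ ≤ c * ‖ζ‖ ^ 2) (x : E) :
    exp (-2 * f x) * inner ℝ (A (gradient (fun y => exp (f y)) x))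
      (gradient (fun y => exp (f y)) x) ≤ c * K ^ 2 := by
  set g := gradient (fun y => exp (f y)) x
  have hg : ‖g‖ ≤ K * exp (f x) := by
    simpa [g, gradient] using hf.norm_fderiv_exp_comp_le x
  have hexp : exp (-2 * f x) * exp (f x) ^ 2 = 1 := by
    rw [← exp_nat_mul, ← exp_add]; norm_num
  calc exp (-2 * f x) * inner ℝ (A g) g ≤ exp (-2 * f x) * (c * (K * exp (f x)) ^ 2) := by
        gcongr
        exact (hA g).trans (by gcongr)
    _ = c * K ^ 2 * (exp (-2 * f x) * exp (f x) ^ 2) := by ring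
    _ = c * K ^ 2 := by rw [hexp, mul_one]

theorem LipschitzWith.exp_neg_two_mul_setLIntegral_sq_exp_sub_le {E : Type*}
    [SeminormedAddCommGroup E] [MeasurableSpace E] [OpensMeasurableSpace E] (μ : Measure E)
    {f : E → ℝ} {K : ℝ≥0} (hf : LipschitzWith K f) (J : E → ℝ≥0∞) (ξ : E) (r : ℝ) :
    ENNReal.ofReal (exp (-2 * f ξ)) *
        ∫⁻ η in Metric.closedBall ξ r, ENNReal.ofReal ((exp (f η) - exp (f ξ)) ^ 2) * J η ∂μ ≤
      ENNReal.ofReal (K ^ 2 * exp (2 * r * K)) *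
        ∫⁻ η in Metric.closedBall ξ r, ENNReal.ofReal (‖η - ξ‖ ^ 2) * J η ∂μ := by
  rw [← lintegral_const_mul' _ _ ofReal_ne_top, ← lintegral_const_mul' _ _ ofReal_ne_top]
  refine setLIntegral_mono' measurableSet_closedBall fun η hη => ?_
  rw [Metric.mem_closedBall, dist_eq_norm] at hη
  rw [← mul_assoc, ← mul_assoc, ← ofReal_mul (exp_pos _).le, ← ofReal_mul (by positivity)]
  gcongr ENNReal.ofReal ?_ * _
  calc exp (-2 * f ξ) * (exp (f η) - exp (f ξ)) ^ 2
      ≤ K ^ 2 * ‖η - ξ‖ ^ 2 * exp (2 * K * ‖η - ξ‖) := hf.exp_neg_two_mul_sq_exp_sub_le η ξ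
    _ ≤ K ^ 2 * ‖η - ξ‖ ^ 2 * exp (2 * K * r) := by gcongr
    _ = K ^ 2 * exp (2 * r * K) * ‖η - ξ‖ ^ 2 := by ring_nf

theorem stmt_17_general (d : ℕ) (c κ₀ β δ₀ : ℝ)
    (hc : 1 ≤ c) :
    ∃ C : ℝ, 0 < C ∧
      ∀ (A : EuclideanSpace ℝ (Fin d) →
          EuclideanSpace ℝ (Fin d) →L[ℝ] EuclideanSpace ℝ (Fin d)),
        (∀ ξ ζ, c⁻¹ * ‖ζ‖ ^ 2 ≤ (inner ℝ (A ξ ζ) ζ : ℝ) ∧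
          (inner ℝ (A ξ ζ) ζ : ℝ) ≤ c * ‖ζ‖ ^ 2) →
        ∀ J : EuclideanSpace ℝ (Fin d) → EuclideanSpace ℝ (Fin d) → ℝ≥0∞,
          Measurable (Function.uncurry J) →
          (∀ η ξ, dist η ξ ≤ δ₀ →
            J η ξ ≤ ENNReal.ofReal (κ₀ * ‖η - ξ‖ ^ (-((d : ℝ) + β)))) →
          ∀ (s lam : ℝ) (x y : EuclideanSpace ℝ (Fin d)),
            0 < s → 0 < lam → lam ≤ δ₀ →
            ∀ ξ : EuclideanSpace ℝ (Fin d),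
              ENNReal.ofReal (Real.exp (-2 * (s * min ‖ξ - x‖ ‖x - y‖))) *
                  (ENNReal.ofReal
                      ((inner ℝ
                        (A ξ (gradient
                          (fun ζ => Real.exp (s * min ‖ζ - x‖ ‖x - y‖)) ξ))
                        (gradient
                          (fun ζ => Real.exp (s * min ‖ζ - x‖ ‖x - y‖)) ξ) : ℝ))
                    + ∫⁻ η in Metric.closedBall ξ lam,
                        ENNReal.ofReal
                          ((Real.exp (s * min ‖η - x‖ ‖x - y‖)
                            - Real.exp (s * min ‖ξ - x‖ ‖x - y‖)) ^ 2) * J η ξ)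
                ≤ ENNReal.ofReal (C * s ^ 2) *
                    (1 + ENNReal.ofReal (Real.exp (2 * lam * s)) *
                      ⨆ ξ' : EuclideanSpace ℝ (Fin d),
                        ∫⁻ η in Metric.closedBall ξ' lam,
                          ENNReal.ofReal (‖η - ξ'‖ ^ 2) * J η ξ') := by
  refine ⟨c, by linarith, fun A hA J _ _ s lam x y hs _ _ ξ => ?_⟩
  set ψ : EuclideanSpace ℝ (Fin d) → ℝ := fun ζ => s * min ‖ζ - x‖ ‖x - y‖
  set S := ⨆ ξ' : EuclideanSpace ℝ (Fin d),
    ∫⁻ η in Metric.closedBall ξ' lam, ENNReal.ofReal (‖η - ξ'‖ ^ 2) * J η ξ'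
  have hψ : LipschitzWith s.toNNReal ψ := by
    simpa [Real.coe_toNNReal _ hs.le] using lipschitzWith_mul_min_norm_sub s.toNNReal x ‖x - y‖
  have hgrad := hψ.exp_neg_two_mul_inner_gradient_exp_le (A ξ) (by linarith)
    (fun ζ => (hA ξ ζ).2) ξ
  have hjump := hψ.exp_neg_two_mul_setLIntegral_sq_exp_sub_le volume (J · ξ) ξ lam
  rw [Real.coe_toNNReal _ hs.le] at hgrad hjump
  have hS : ∫⁻ η in Metric.closedBall ξ lam, ENNReal.ofReal (‖η - ξ‖ ^ 2) * J η ξ ≤ S :=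
    le_iSup (fun ξ' => ∫⁻ η in Metric.closedBall ξ' lam,
      ENNReal.ofReal (‖η - ξ'‖ ^ 2) * J η ξ') ξ
  calc _ = ENNReal.ofReal (exp (-2 * ψ ξ)) * ENNReal.ofReal (inner ℝ
          (A ξ (gradient (fun y => exp (ψ y)) ξ)) (gradient (fun y => exp (ψ y)) ξ)) +
        ENNReal.ofReal (exp (-2 * ψ ξ)) * ∫⁻ η in Metric.closedBall ξ lam,
          ENNReal.ofReal ((exp (ψ η) - exp (ψ ξ)) ^ 2) * J η ξ := mul_add _ _ _
    _ ≤ ENNReal.ofReal (c * s ^ 2) + ENNReal.ofReal (s ^ 2 * exp (2 * lam * s)) * S := by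
        refine add_le_add ?_ (hjump.trans (mul_le_mul_right hS _))
        rw [← ofReal_mul (exp_pos _).le]
        exact ofReal_le_ofReal hgrad
    _ ≤ ENNReal.ofReal (c * s ^ 2) * (1 + ENNReal.ofReal (exp (2 * lam * s)) * S) := by
        have hs2 : s ^ 2 ≤ c * s ^ 2 := le_mul_of_one_le_left (sq_nonneg s) hc
        rw [mul_add, mul_one, ofReal_mul (sq_nonneg s), mul_assoc]
        gcongr

theorem stmt_17 (d : ℕ) (hd : 1 ≤ d) (c κ₀ β δ₀ : ℝ)
    (hc : 1 ≤ c) (hκ : 0 < κ₀) (hβ0 : 0 < β) (hβ2 : β < 2) (hδ₀ : 0 < δ₀) :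
    ∃ C : ℝ, 0 < C ∧
      ∀ (A : EuclideanSpace ℝ (Fin d) →
          EuclideanSpace ℝ (Fin d) →L[ℝ] EuclideanSpace ℝ (Fin d)),
        (∀ ξ ζ, c⁻¹ * ‖ζ‖ ^ 2 ≤ (inner ℝ (A ξ ζ) ζ : ℝ) ∧
          (inner ℝ (A ξ ζ) ζ : ℝ) ≤ c * ‖ζ‖ ^ 2) →
        ∀ J : EuclideanSpace ℝ (Fin d) → EuclideanSpace ℝ (Fin d) → ℝ≥0∞,
          Measurable (Function.uncurry J) →
          (∀ η ξ, dist η ξ ≤ δ₀ →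
            J η ξ ≤ ENNReal.ofReal (κ₀ * ‖η - ξ‖ ^ (-((d : ℝ) + β)))) →
          ∀ (s lam : ℝ) (x y : EuclideanSpace ℝ (Fin d)),
            0 < s → 0 < lam → lam ≤ δ₀ →
            ∀ ξ : EuclideanSpace ℝ (Fin d),
              ENNReal.ofReal (Real.exp (-2 * (s * min ‖ξ - x‖ ‖x - y‖))) *
                  (ENNReal.ofReal
                      ((inner ℝ
                        (A ξ (gradient
                          (fun ζ => Real.exp (s * min ‖ζ - x‖ ‖x - y‖)) ξ))
                        (gradient
                          (fun ζ => Real.exp (s * min ‖ζ - x‖ ‖x - y‖)) ξ) : ℝ))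
                    + ∫⁻ η in Metric.closedBall ξ lam,
                        ENNReal.ofReal
                          ((Real.exp (s * min ‖η - x‖ ‖x - y‖)
                            - Real.exp (s * min ‖ξ - x‖ ‖x - y‖)) ^ 2) * J η ξ)
                ≤ ENNReal.ofReal (C * s ^ 2) *
                    (1 + ENNReal.ofReal (Real.exp (2 * lam * s)) *
                      ⨆ ξ' : EuclideanSpace ℝ (Fin d),
                        ∫⁻ η in Metric.closedBall ξ' lam,
                          ENNReal.ofReal (‖η - ξ'‖ ^ 2) * J η ξ') :=
  stmt_17_general d c κ₀ β δ₀ hc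
end
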